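/- arXiv:2001.03880 — 3 statements merged into one kernel-verified Lean document; each statement's English description precedes it below -/
import Mathlib

section
/- Let Ω ⊆ Σ^S be a configuration space with the topological Markov property and the pivot property. Then Ω has the uniform pivot property: for every finite A ⊂ S there exists a finite B ⊂ S such that every pair of configurations in Ω agreeing off A can be transformed into each other by a sequence of admissible single-site pivot moves, all of which occur at sites in B. -/
open scoped Classical

/-- `PivotChainIn Ω B x y`: there is a finite sequence of configurations in `Ω` from `x` to `y`
in which consecutive configurations differ at exactly one site, and all these sites lie in `B`. -/
def PivotChainIn {S α : Type*} (Ω : Set (S → α)) (B : Set S) (x y : S → α) : Prop :=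
  ∃ (n : ℕ) (z : ℕ → S → α), z 0 = x ∧ z n = y ∧ (∀ i ≤ n, z i ∈ Ω) ∧
    ∀ i < n, ∃ s ∈ B, z i s ≠ z (i + 1) s ∧ ∀ t, t ≠ s → z i t = z (i + 1) t

/-- Topological Markov property. -/
def TMP {S α : Type*} (Ω : Set (S → α)) : Prop :=
  ∀ A : Finset S, ∃ B : Finset S, A ⊆ B ∧
    ∀ x ∈ Ω, ∀ y ∈ Ω, (∀ i ∈ B, i ∉ A → x i = y i) →
      (fun i => if i ∈ B then x i else y i) ∈ Ω

/-- A configuration space with the TMP and the pivot property has the uniform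
pivot property: for every finite `A` there is a finite `B` such that any two configurations
of `Ω` agreeing off `A` are connected by admissible single-site pivot moves inside `B`. -/
theorem stmt_5 {S α : Type*} [Countable S] [Fintype α]
    [TopologicalSpace α] [DiscreteTopology α]
    (Ω : Set (S → α)) (hne : Ω.Nonempty) (hcomp : IsCompact Ω)
    (htmp : TMP Ω)
    (hpivot : ∀ x ∈ Ω, ∀ y ∈ Ω, {i | x i ≠ y i}.Finite → PivotChainIn Ω Set.univ x y) :
    ∀ A : Finset S, ∃ B : Finset S,
      ∀ x ∈ Ω, ∀ y ∈ Ω, (∀ i, i ∉ A → x i = y i) → PivotChainIn Ω (B : Set S) x y := by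
  intro A
  -- The compact set of asymptotic pairs agreeing off `A`.
  set K : Set ((S → α) × (S → α)) :=
    (Ω ×ˢ Ω) ∩ {p | ∀ i, i ∉ A → p.1 i = p.2 i} with hKdef
  have hKcl : IsClosed {p : (S → α) × (S → α) | ∀ i, i ∉ A → p.1 i = p.2 i} := by
    have : {p : (S → α) × (S → α) | ∀ i, i ∉ A → p.1 i = p.2 i}
        = ⋂ i, ⋂ (_ : i ∉ A), {p | p.1 i = p.2 i} := by
      ext p; simp
    rw [this]
    exact isClosed_iInter fun i => isClosed_iInter fun _ =>
      isClosed_eq ((continuous_apply i).comp continuous_fst)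
        ((continuous_apply i).comp continuous_snd)
  have hKcomp : IsCompact K := (hcomp.prod hcomp).inter_right hKcl
  -- Key local statement: each pair has a finite window `C` such that every pair of `K`
  -- agreeing with it on `C` is connected by a pivot chain inside `C`.
  have key : ∀ p : (S → α) × (S → α), ∃ C : Finset S, p ∈ K →
      ∀ q ∈ K, (∀ s ∈ C, q.1 s = p.1 s ∧ q.2 s = p.2 s) →
        PivotChainIn Ω (↑C : Set S) q.1 q.2 := by
    intro p
    by_cases hp : p ∈ K
    swap
    · exact ⟨∅, fun h => absurd h hp⟩
    obtain ⟨⟨hx, hy⟩, hagree⟩ := hp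
    obtain ⟨n, z, hz0, hzn, hzΩ, hstep⟩ := hpivot p.1 hx p.2 hy
      (Set.Finite.subset A.finite_toSet (by
        intro i hi
        by_contra hiA
        exact hi (hagree i hiA)))
    -- finite support of the chain
    have hsupp : ∀ i ≤ n, {s | z i s ≠ z 0 s}.Finite := by
      intro i
      induction i with
      | zero => intro _; simp
      | succ i ih =>
        intro h
        have hi := ih (Nat.le_of_succ_le h)
        obtain ⟨s, -, -, hrest⟩ := hstep i (Nat.lt_of_succ_le h)
        refine (hi.insert s).subset ?_
        intro t ht
        by_cases hts : t = s
        · simp [hts]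
        · exact Set.mem_insert_of_mem _ (by
            have := hrest t hts
            simpa [this] using ht)
    have hDfin : (⋃ i ∈ Set.Iic n, {s | z i s ≠ z 0 s}).Finite :=
      (Set.finite_Iic n).biUnion fun i hi => hsupp i hi
    set F : Finset S := A ∪ hDfin.toFinset with hFdef
    have hAF : A ⊆ F := Finset.subset_union_left
    have hFz : ∀ i ≤ n, ∀ s, s ∉ F → z i s = p.1 s := by
      intro i hi s hs
      have hsD : s ∉ ⋃ i ∈ Set.Iic n, {s | z i s ≠ z 0 s} := by
        intro hsD
        exact hs (Finset.mem_union_right _ (hDfin.mem_toFinset.mpr hsD))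
      have : ¬ z i s ≠ z 0 s := by
        intro hne'
        exact hsD (Set.mem_biUnion hi hne')
      rw [not_not.mp this, hz0]
    obtain ⟨C, hFC, hCglue⟩ := htmp F
    refine ⟨C, fun _ q hq hqagree => ?_⟩
    obtain ⟨⟨hq1, hq2⟩, hqA⟩ := hq
    -- transplanted chain
    set z' : ℕ → S → α := fun i s => if s ∈ C then z i s else q.1 s with hz'def
    have hz'Ω : ∀ i ≤ n, z' i ∈ Ω := by
      intro i hi
      exact hCglue (z i) (hzΩ i hi) q.1 hq1 (by
        intro s hsC hsF
        rw [hFz i hi s hsF, (hqagree s hsC).1])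
    refine ⟨n, z', ?_, ?_, hz'Ω, ?_⟩
    · funext s
      by_cases hsC : s ∈ C
      · simp only [hz'def, if_pos hsC, hz0]
        exact ((hqagree s hsC).1).symm
      · simp [hz'def, hsC]
    · funext s
      by_cases hsC : s ∈ C
      · simp only [hz'def, if_pos hsC, hzn]
        exact ((hqagree s hsC).2).symm
      · simp only [hz'def, if_neg hsC]
        exact hqA s (fun hsA => hsC (hFC (hAF hsA)))
    · intro i hin
      obtain ⟨s, -, hne', hrest⟩ := hstep i hin
      have hsF : s ∈ F := by
        by_contra hsF
        exact hne' ((hFz i hin.le s hsF).trans (hFz (i + 1) hin s hsF).symm)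
      have hsC : s ∈ C := hFC hsF
      refine ⟨s, hsC, ?_, ?_⟩
      · simpa [hz'def, if_pos hsC] using hne'
      · intro t hts
        by_cases htC : t ∈ C
        · simp [hz'def, if_pos htC, hrest t hts]
        · simp [hz'def, htC]
  choose C hC using key
  -- neighborhoods
  set U : (S → α) × (S → α) → Set ((S → α) × (S → α)) :=
    fun p => {q | ∀ s ∈ C p, q.1 s = p.1 s ∧ q.2 s = p.2 s} with hUdef
  have hUopen : ∀ p, IsOpen (U p) := by
    intro p
    have : U p = ⋂ s ∈ C p,
        ((fun q : (S → α) × (S → α) => q.1 s) ⁻¹' {p.1 s} ∩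
         (fun q : (S → α) × (S → α) => q.2 s) ⁻¹' {p.2 s}) := by
      ext q; simp [hUdef]
    rw [this]
    exact isOpen_biInter_finset fun s _ =>
      (((isOpen_discrete _).preimage ((continuous_apply s).comp continuous_fst)).inter
        ((isOpen_discrete _).preimage ((continuous_apply s).comp continuous_snd)))
  have hUnhds : ∀ p ∈ K, U p ∈ nhds p := fun p _ =>
    (hUopen p).mem_nhds (fun s _ => ⟨rfl, rfl⟩)
  obtain ⟨t, htK, hcover⟩ := hKcomp.elim_nhds_subcover U hUnhds
  refine ⟨t.sup C, ?_⟩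
  intro x hx y hy hxy
  have hpK : (x, y) ∈ K := ⟨⟨hx, hy⟩, hxy⟩
  obtain ⟨q, hqt, hpq⟩ := Set.mem_iUnion₂.mp (hcover hpK)
  obtain ⟨m, w, hw0, hwn, hwΩ, hwstep⟩ := hC q (htK q hqt) (x, y) hpK hpq
  refine ⟨m, w, hw0, hwn, hwΩ, fun i hi => ?_⟩
  obtain ⟨s, hsC, h1, h2⟩ := hwstep i hi
  exact ⟨s, Finset.mem_coe.mpr (Finset.mem_sup.mpr ⟨q, hqt, Finset.mem_coe.mp hsC⟩), h1, h2⟩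
end

section
/- Let Ω ⊆ Σ^S be a configuration space with the uniform pivot property. An interaction Φ on Ω is variation-summable (i.e., ∑_{C : C∩A ≠ ∅} Var_A(Φ_C) < ∞ for all finite A) if and only if for every single site s, ∑_{C ∋ s} Var_s(Φ_C) < ∞. -/
open scoped ENNReal Classical

/-- The variation of `f` on a set of sites `A`, over pairs of configurations of `Ω`
agreeing off `A`, valued in `ℝ≥0∞`. -/
noncomputable def Var {S α : Type*} (Ω : Set (S → α)) (A : Set S) (f : (S → α) → ℝ) : ℝ≥0∞ :=
  ⨆ p : {p : (S → α) × (S → α) // p.1 ∈ Ω ∧ p.2 ∈ Ω ∧ ∀ i ∉ A, p.1 i = p.2 i},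
    ENNReal.ofReal |f (p : (S → α) × (S → α)).2 - f (p : (S → α) × (S → α)).1|

/-- Uniform pivot property. -/
def UniformPivotProperty {S α : Type*} (Ω : Set (S → α)) : Prop :=
  ∀ A : Finset S, ∃ B : Finset S,
    ∀ x ∈ Ω, ∀ y ∈ Ω, (∀ i, i ∉ A → x i = y i) →
      ∃ (n : ℕ) (z : ℕ → S → α), z 0 = x ∧ z n = y ∧ (∀ i ≤ n, z i ∈ Ω) ∧
        ∀ i < n, ∃ s ∈ B, z i s ≠ z (i + 1) s ∧ ∀ t, t ≠ s → z i t = z (i + 1) t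

/-!
Two configurations of `Ω` agreeing off `A` are joined by pivots at sites of a
fixed finite `B`, and after erasing loops such a pivot path visits each restriction to `B`
at most once, so it has fewer than `|α|^|B|` steps. Each pivot at `s` changes `Φ_C` by at most
`Var_s(Φ_C)`, which vanishes unless `s ∈ C`, hence
`Var_A(Φ_C) ≤ |α|^|B| ∑_{s ∈ B} Var_s(Φ_C)`, and summing over `C` gives the converse
direction; the direct one is the case `A = {s}`.
-/

namespace SimpleGraph

theorem Walk.ofReal_abs_sub_le_length_mul {V : Type*} {G : SimpleGraph V} (f : V → ℝ)
    {c : ℝ≥0∞} (hc : ∀ v w, G.Adj v w → ENNReal.ofReal |f w - f v| ≤ c) :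
    ∀ {u v : V} (p : G.Walk u v), ENNReal.ofReal |f v - f u| ≤ p.length * c
  | _, _, .nil => by simp
  | u, v, .cons (v := w) h p => by
    calc ENNReal.ofReal |f v - f u|
        ≤ ENNReal.ofReal (|f w - f u| + |f v - f w|) :=
          ENNReal.ofReal_le_ofReal (by linarith [abs_sub_le (f v) (f w) (f u)])
      _ = ENNReal.ofReal |f w - f u| + ENNReal.ofReal |f v - f w| :=
          ENNReal.ofReal_add (abs_nonneg _) (abs_nonneg _)
      _ ≤ c + p.length * c := add_le_add (hc u w h) (ofReal_abs_sub_le_length_mul f hc p)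
      _ = (Walk.cons h p).length * c := by push_cast [Walk.length_cons]; ring

end SimpleGraph

section Pivots

variable {S α : Type*}

def pivotGraph (Ω : Set (S → α)) (B : Set S) : SimpleGraph (S → α) where
  Adj x y := x ≠ y ∧ x ∈ Ω ∧ y ∈ Ω ∧ ∃ s ∈ B, ∀ t ≠ s, x t = y t
  symm := ⟨fun _ _ ⟨hne, hx, hy, s, hs, h⟩ => ⟨hne.symm, hy, hx, s, hs, fun t ht => (h t ht).symm⟩⟩
  loopless := ⟨fun _ h => h.1 rfl⟩

variable {Ω : Set (S → α)} {B : Set S}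

theorem pivotGraph.eq_of_mem_support {x y : S → α} (p : (pivotGraph Ω B).Walk x y) :
    ∀ z ∈ p.support, ∀ t ∉ B, z t = x t := by
  induction p with
  | nil => simp
  | cons h p ih =>
    obtain ⟨-, -, -, s, hs, hpivot⟩ := h
    intro z hz t ht
    rcases List.mem_cons.mp hz with rfl | hz
    · rfl
    · rw [ih z hz t ht, hpivot t (fun hts => ht (hts ▸ hs))]

theorem pivotGraph.exists_walk_length_lt [Fintype α] {B : Finset S} {x y : S → α}
    (h : (pivotGraph Ω B).Reachable x y) :
    ∃ p : (pivotGraph Ω B).Walk x y, p.length < Fintype.card (B → α) := by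
  obtain ⟨p⟩ := h
  refine ⟨p.toPath, ?_⟩
  have hinj : ∀ z ∈ (p.toPath : (pivotGraph Ω B).Walk x y).support,
      ∀ w ∈ (p.toPath : (pivotGraph Ω B).Walk x y).support,
      (fun b : B => z b) = (fun b : B => w b) → z = w := by
    intro z hz w hw hzw
    funext t
    by_cases ht : t ∈ B
    · exact congrFun hzw ⟨t, ht⟩
    · rw [pivotGraph.eq_of_mem_support _ z hz t ht, pivotGraph.eq_of_mem_support _ w hw t ht]
  have := ((p.toPath.property.support_nodup).map_on hinj).length_le_card
  rw [List.length_map, SimpleGraph.Walk.length_support] at this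
  omega

theorem reachable_pivotGraph_of_pivots {z : ℕ → S → α} :
    ∀ n, (∀ i ≤ n, z i ∈ Ω) →
      (∀ i < n, ∃ s ∈ B, z i s ≠ z (i + 1) s ∧ ∀ t, t ≠ s → z i t = z (i + 1) t) →
      (pivotGraph Ω B).Reachable (z 0) (z n)
  | 0, _, _ => SimpleGraph.Reachable.refl _
  | n + 1, hmem, hpivot => by
    refine (reachable_pivotGraph_of_pivots n (fun i hi => hmem i (by omega))
      (fun i hi => hpivot i (by omega))).trans (SimpleGraph.Adj.reachable ?_)
    obtain ⟨s, hs, hne, hrest⟩ := hpivot n (by omega)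
    exact ⟨fun h => hne (congrFun h s), hmem n (by omega), hmem (n + 1) le_rfl, s, hs, hrest⟩

theorem UniformPivotProperty.exists_reachable (h : UniformPivotProperty Ω) (A : Finset S) :
    ∃ B : Finset S, ∀ x ∈ Ω, ∀ y ∈ Ω, (∀ i ∉ A, x i = y i) →
      (pivotGraph Ω (B : Set S)).Reachable x y := by
  obtain ⟨B, hB⟩ := h A
  refine ⟨B, fun x hx y hy hxy => ?_⟩
  obtain ⟨n, z, rfl, rfl, hmem, hpivot⟩ := hB x hx y hy hxy
  exact reachable_pivotGraph_of_pivots n hmem hpivot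

end Pivots

section Variation

variable {S α : Type*} {Ω : Set (S → α)}

theorem ofReal_abs_sub_le_var {A : Set S} {f : (S → α) → ℝ} {x y : S → α} (hx : x ∈ Ω)
    (hy : y ∈ Ω) (h : ∀ i ∉ A, x i = y i) : ENNReal.ofReal |f y - f x| ≤ Var Ω A f :=
  le_iSup_of_le ⟨(x, y), hx, hy, h⟩ le_rfl

theorem var_singleton_eq_zero {f : (S → α) → ℝ} {s : S}
    (h : ∀ x y : S → α, (∀ i ≠ s, x i = y i) → f x = f y) : Var Ω {s} f = 0 :=
  le_antisymm (iSup_le fun p => by simp [h _ _ fun i hi => p.2.2.2 i hi]) zero_le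

theorem pivotGraph.ofReal_abs_sub_le_sum_var {B : Finset S} (f : (S → α) → ℝ) {x y : S → α}
    (h : (pivotGraph Ω B).Adj x y) : ENNReal.ofReal |f y - f x| ≤ ∑ s ∈ B, Var Ω {s} f := by
  obtain ⟨-, hx, hy, s, hs, hpivot⟩ := h
  exact (ofReal_abs_sub_le_var hx hy fun t ht => hpivot t ht).trans
    (Finset.single_le_sum (f := fun s => Var Ω {s} f) (fun _ _ => zero_le) hs)

theorem var_le_card_mul_sum_var_singleton [Fintype α] {A B : Finset S}
    (hB : ∀ x ∈ Ω, ∀ y ∈ Ω, (∀ i ∉ A, x i = y i) → (pivotGraph Ω (B : Set S)).Reachable x y)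
    (f : (S → α) → ℝ) :
    Var Ω A f ≤ Fintype.card (B → α) * ∑ s ∈ B, Var Ω {s} f := by
  refine iSup_le fun ⟨(x, y), hx, hy, hxy⟩ => ?_
  obtain ⟨p, hp⟩ := pivotGraph.exists_walk_length_lt (hB x hx y hy hxy)
  calc ENNReal.ofReal |f y - f x|
      ≤ p.length * ∑ s ∈ B, Var Ω {s} f :=
        p.ofReal_abs_sub_le_length_mul f fun _ _ => pivotGraph.ofReal_abs_sub_le_sum_var f
    _ ≤ Fintype.card (B → α) * ∑ s ∈ B, Var Ω {s} f := by gcongr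

theorem tsum_var_singleton_of_mem_eq_tsum {Φ : Finset S → (S → α) → ℝ}
    (hlocal : ∀ C : Finset S, ∀ x y : S → α, (∀ i ∈ C, x i = y i) → Φ C x = Φ C y) (s : S) :
    ∑' C : {C : Finset S // s ∈ C}, Var Ω {s} (Φ C) = ∑' C, Var Ω {s} (Φ C) :=
  tsum_subtype_eq_of_support_subset (f := fun C => Var Ω {s} (Φ C)) (s := {C | s ∈ C})
    fun C hC => by
    by_contra hsC
    exact hC <| var_singleton_eq_zero fun x y hxy =>
      hlocal C x y fun i hi => hxy i fun his => hsC (his ▸ hi)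

end Variation

theorem stmt_11_general {S α : Type*} [Fintype α]
    (Ω : Set (S → α))
    (hupivot : UniformPivotProperty Ω)
    (Φ : Finset S → (S → α) → ℝ)
    (hlocal : ∀ C : Finset S, ∀ x y : S → α, (∀ i ∈ C, x i = y i) → Φ C x = Φ C y) :
    (∀ A : Finset S,
        (∑' C : {C : Finset S // (C ∩ A).Nonempty}, Var Ω (A : Set S) (Φ C)) ≠ ⊤)
      ↔ ∀ s : S, (∑' C : {C : Finset S // s ∈ C}, Var Ω {s} (Φ C)) ≠ ⊤ := by
  constructor
  · intro h s
    have hsingle : ∀ C : Finset S, (C ∩ {s}).Nonempty ↔ s ∈ C := fun C => by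
      rw [Finset.inter_singleton]; split_ifs <;> simpa
    rw [← (Equiv.subtypeEquivRight hsingle).tsum_eq]
    simpa using h {s}
  · intro h A
    obtain ⟨B, hB⟩ := hupivot.exists_reachable A
    refine ne_top_of_le_ne_top ?_ <| calc
      ∑' C : {C : Finset S // (C ∩ A).Nonempty}, Var Ω A (Φ C)
        ≤ ∑' C, Var Ω A (Φ C) := ENNReal.tsum_comp_le_tsum_of_injective Subtype.val_injective _
      _ ≤ ∑' C, Fintype.card (B → α) * ∑ s ∈ B, Var Ω {s} (Φ C) :=
        ENNReal.tsum_le_tsum fun C => var_le_card_mul_sum_var_singleton hB (Φ C)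
      _ = Fintype.card (B → α) * ∑ s ∈ B, ∑' C : {C : Finset S // s ∈ C}, Var Ω {s} (Φ C) := by
        simp only [ENNReal.tsum_mul_left, tsum_var_singleton_of_mem_eq_tsum hlocal,
          Summable.tsum_finsetSum fun _ _ => ENNReal.summable]
    exact ENNReal.mul_ne_top (ENNReal.natCast_ne_top _)
      (ENNReal.sum_ne_top.mpr fun s _ => h s)

/-- on a configuration space with the uniform pivot property, an interaction is
variation-summable iff `∑_{C ∋ s} Var_s(Φ_C) < ∞` for every single site `s`. -/
theorem stmt_11 {S α : Type*} [Countable S] [Fintype α]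
    [TopologicalSpace α] [DiscreteTopology α]
    (Ω : Set (S → α)) (hne : Ω.Nonempty) (hcomp : IsCompact Ω)
    (hupivot : UniformPivotProperty Ω)
    (Φ : Finset S → (S → α) → ℝ)
    (hlocal : ∀ C : Finset S, ∀ x y : S → α, (∀ i ∈ C, x i = y i) → Φ C x = Φ C y) :
    (∀ A : Finset S,
        (∑' C : {C : Finset S // (C ∩ A).Nonempty}, Var Ω (A : Set S) (Φ C)) ≠ ⊤)
      ↔ ∀ s : S, (∑' C : {C : Finset S // s ∈ C}, Var Ω {s} (Φ C)) ≠ ⊤ :=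
  stmt_11_general Ω hupivot Φ hlocal
end

section
/- Let Ω = {0,1}^ℤ be the binary full shift. For every asymptotic pair (x,y), the dual norm of the functional Φ ↦ ψ_Φ(x,y) on the Banach space of shift-invariant norm-summable interactions equals sup over finite A ⊂ ℤ of (1/|A|) ∑_{w ∈ {0,1}^A} |Δ_w(x,y)|, where Δ_w(x,y) is the difference between the number of occurrences of the pattern w in y and in x. -/
/-!
Every nonempty `C ⊆ ℤ` is uniquely a translate `A + k` of a shape `A` with minimum `0`. For a
local shift-invariant `Φ`, summing `Φ(y_{A+k}) - Φ(x_{A+k})` over `k` gives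
`∑_w Φ_A(w) Δ_w(x,y)`, hence `|ψ_Φ(x,y)| ≤ S · ∑_A |A| sup |Φ_A|`, where `S` is the right-hand
side; the last sum is at most `‖Φ‖_NS` because the `|A|` translates of `A` containing `0` are
distinct. Conversely, for a fixed `A` the interaction equal to `|A|⁻¹ sign Δ_w(x,y)` on the
translates of `A` carrying `w` has norm at most `1` and `ψ = |A|⁻¹ ∑_w |Δ_w(x,y)|`.
-/

open scoped ENNReal Classical

/-- Binary configurations on `ℤ`. -/
abbrev Conf := ℤ → Bool

/-- Interaction: each `Φ_C` depends only on the restriction of the configuration to `C`. -/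
def IsLocalInteraction (Φ : Finset ℤ → Conf → ℝ) : Prop :=
  ∀ C : Finset ℤ, ∀ x y : Conf, (∀ i ∈ C, x i = y i) → Φ C x = Φ C y

/-- Shift invariance of an interaction: `Φ_{k+C}(x) = Φ_C(σ^k x)`. -/
def IsShiftInvInteraction (Φ : Finset ℤ → Conf → ℝ) : Prop :=
  ∀ (k : ℤ) (C : Finset ℤ) (x : Conf),
    Φ (C.image (fun i => i + k)) x = Φ C (fun i => x (i + k))

/-- The NS-norm on the full shift: `‖Φ‖_NS = ∑_{C ∋ 0} sup_x |Φ_C(x)|`, valued in `ℝ≥0∞`. -/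
noncomputable def normNS (Φ : Finset ℤ → Conf → ℝ) : ℝ≥0∞ :=
  ∑' C : {C : Finset ℤ // (0 : ℤ) ∈ C}, ⨆ x : Conf, ENNReal.ofReal |Φ C x|

/-- The cocycle `ψ_Φ(x, y) = ∑_C [Φ(y_C) - Φ(x_C)]` generated by an interaction `Φ`. -/
noncomputable def psi (Φ : Finset ℤ → Conf → ℝ) (x y : Conf) : ℝ :=
  ∑' C : Finset ℤ, (Φ C y - Φ C x)

/-- `Δ_w(x,y)`: the difference between the number of occurrences of the pattern `w` (with
shape `A`) in `y` and in `x`. -/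
noncomputable def deltaCount (A : Finset ℤ) (w : {a // a ∈ A} → Bool) (x y : Conf) : ℝ :=
  ∑' i : ℤ,
    ((if ∀ a : {a // a ∈ A}, y ((a : ℤ) + i) = w a then (1 : ℝ) else 0)
      - (if ∀ a : {a // a ∈ A}, x ((a : ℤ) + i) = w a then (1 : ℝ) else 0))

lemma image_add_right_injective {A : Finset ℤ} (hA : A.Nonempty) :
    Function.Injective fun k : ℤ => A.image (fun i => i + k) := by
  intro k k' h
  have hmin (k : ℤ) : (A.image (fun i => i + k)).min' (hA.image _) = A.min' hA + k :=
    Finset.min'_image (fun a b hab => by simpa using hab) A _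
  have := hmin k
  simp only [h, hmin k'] at this
  omega

lemma image_add_image_add (A : Finset ℤ) (k k' : ℤ) :
    (A.image (fun i => i + k)).image (fun i => i + k') = A.image (fun i => i + (k + k')) := by
  rw [Finset.image_image]
  exact Finset.image_congr fun i _ => by simp [add_assoc]

section Patterns

variable {A : Finset ℤ}

noncomputable def occurs (A : Finset ℤ) (w : {a // a ∈ A} → Bool) (z : Conf) (k : ℤ) : ℝ :=
  if ∀ a : {a // a ∈ A}, z (a + k) = w a then 1 else 0

lemma sum_mul_occurs (g : ({a // a ∈ A} → Bool) → ℝ) (z : Conf) (k : ℤ) :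
    ∑ w, g w * occurs A w z k = g (fun a => z (a + k)) := by
  rw [Finset.sum_eq_single_of_mem (fun a : {a // a ∈ A} => z (a + k)) (Finset.mem_univ _)]
  · simp [occurs]
  · intro w _ hw
    rw [occurs, if_neg fun h => hw (funext fun a => (h a).symm), mul_zero]

def extendPattern (A : Finset ℤ) (w : {a // a ∈ A} → Bool) : Conf :=
  fun i => if h : i ∈ A then w ⟨i, h⟩ else false

lemma IsLocalInteraction.apply_shift_eq_sum {Φ : Finset ℤ → Conf → ℝ}
    (hloc : IsLocalInteraction Φ) (A : Finset ℤ) (z : Conf) (k : ℤ) :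
    Φ A (fun i => z (i + k)) = ∑ w, Φ A (extendPattern A w) * occurs A w z k := by
  rw [sum_mul_occurs (fun w => Φ A (extendPattern A w))]
  exact hloc A _ _ fun i hi => by simp [extendPattern, hi]

end Patterns

section AsymptoticPair

variable {x y : Conf}

noncomputable def disagreeShifts (hxy : {i | x i ≠ y i}.Finite) (A : Finset ℤ) : Finset ℤ :=
  (hxy.toFinset ×ˢ A).image fun p => p.1 - p.2

lemma eq_of_notMem_disagreeShifts (hxy : {i | x i ≠ y i}.Finite) {A : Finset ℤ} {k : ℤ} (hk : k ∉ disagreeShifts hxy A)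
    {a : ℤ} (ha : a ∈ A) : x (a + k) = y (a + k) := by
  by_contra h
  exact hk (Finset.mem_image.2 ⟨(a + k, a), Finset.mem_product.2
    ⟨hxy.mem_toFinset.2 h, ha⟩, by ring⟩)

lemma deltaCount_eq_sum (hxy : {i | x i ≠ y i}.Finite) (A : Finset ℤ) (w : {a // a ∈ A} → Bool) :
    deltaCount A w x y = ∑ k ∈ disagreeShifts hxy A, (occurs A w y k - occurs A w x k) := by
  refine tsum_eq_sum fun k hk => ?_
  simp only [eq_of_notMem_disagreeShifts hxy hk (Subtype.property _), sub_self]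

lemma tsum_sub_image_add_eq_sum (hxy : {i | x i ≠ y i}.Finite) {Φ : Finset ℤ → Conf → ℝ}
    (hloc : IsLocalInteraction Φ) (hshift : IsShiftInvInteraction Φ) (A : Finset ℤ) :
    ∑' k : ℤ, (Φ (A.image fun i => i + k) y - Φ (A.image fun i => i + k) x)
      = ∑ w, Φ A (extendPattern A w) * deltaCount A w x y := by
  simp only [hshift _ A, hloc.apply_shift_eq_sum, ← Finset.sum_sub_distrib, ← mul_sub]
  rw [tsum_eq_sum (s := disagreeShifts hxy A), Finset.sum_comm]
  · simp only [deltaCount_eq_sum hxy, Finset.mul_sum]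
  · intro k hk
    simp only [occurs, eq_of_notMem_disagreeShifts hxy hk (Subtype.property _), sub_self,
      mul_zero, Finset.sum_const_zero]

end AsymptoticPair

section PatternInteraction

variable {A : Finset ℤ} (g : ({a // a ∈ A} → Bool) → ℝ)

noncomputable def patternInteraction (A : Finset ℤ) (g : ({a // a ∈ A} → Bool) → ℝ) :
    Finset ℤ → Conf → ℝ := fun C z =>
  if h : ∃ k : ℤ, C = A.image fun i => i + k then g fun a => z (a + h.choose) else 0

lemma patternInteraction_image (hA : A.Nonempty) (k : ℤ) (z : Conf) :
    patternInteraction A g (A.image fun i => i + k) z = g fun a => z (a + k) := by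
  have h : ∃ k' : ℤ, A.image (fun i => i + k) = A.image fun i => i + k' := ⟨k, rfl⟩
  rw [patternInteraction, dif_pos h, ← image_add_right_injective hA h.choose_spec]

lemma patternInteraction_self (hA : A.Nonempty) (z : Conf) :
    patternInteraction A g A z = g fun a => z a := by
  simpa using patternInteraction_image g hA 0 z

lemma patternInteraction_of_not_exists {C : Finset ℤ}
    (hC : ¬ ∃ k : ℤ, C = A.image fun i => i + k) (z : Conf) :
    patternInteraction A g C z = 0 :=
  dif_neg hC

lemma isLocalInteraction_patternInteraction : IsLocalInteraction (patternInteraction A g) := by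
  intro C z z' h
  by_cases hC : ∃ k : ℤ, C = A.image fun i => i + k
  · simp only [patternInteraction, dif_pos hC]
    congr 1
    funext a
    exact h _ ((Finset.ext_iff.1 hC.choose_spec _).2 (Finset.mem_image_of_mem _ a.2))
  · simp only [patternInteraction_of_not_exists g hC]

lemma isShiftInvInteraction_patternInteraction (hA : A.Nonempty) :
    IsShiftInvInteraction (patternInteraction A g) := by
  intro k C z
  by_cases hC : ∃ k' : ℤ, C = A.image fun i => i + k'
  · obtain ⟨k', rfl⟩ := hC
    simp only [image_add_image_add, patternInteraction_image g hA, add_assoc]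
  · refine (patternInteraction_of_not_exists g ?_ _).trans
      (patternInteraction_of_not_exists g hC _).symm
    rintro ⟨k', hk'⟩
    refine hC ⟨k' + -k, ?_⟩
    have := congrArg (Finset.image fun i => i + -k) hk'
    simpa only [image_add_image_add, add_neg_cancel, add_zero, Finset.image_id'] using this

lemma normNS_patternInteraction_le {c : ℝ} (hg : ∀ w, |g w| ≤ c) :
    normNS (patternInteraction A g) ≤ A.card * ENNReal.ofReal c := by
  set T : Finset {C : Finset ℤ // (0 : ℤ) ∈ C} :=
    A.attach.image fun a => ⟨A.image fun i => i + -a.1, Finset.mem_image.2 ⟨a.1, a.2, by ring⟩⟩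
  have hzero : ∀ C ∉ T, ⨆ z, ENNReal.ofReal |patternInteraction A g C.1 z| = 0 := by
    intro C hC
    suffices ¬ ∃ k : ℤ, C.1 = A.image fun i => i + k by
      simp [patternInteraction_of_not_exists g this]
    rintro ⟨k, hk⟩
    obtain ⟨a, ha, hak⟩ := Finset.mem_image.1 (hk ▸ C.2)
    exact hC (Finset.mem_image.2 ⟨⟨a, ha⟩, Finset.mem_attach _ _,
      Subtype.ext (show A.image (fun i => i + -a) = C.1 by rw [hk, show -a = k by omega])⟩)
  have hbound : ∀ C z, ENNReal.ofReal |patternInteraction A g C z| ≤ ENNReal.ofReal c := by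
    intro C z
    refine ENNReal.ofReal_le_ofReal ?_
    by_cases hC : ∃ k : ℤ, C = A.image fun i => i + k
    · rw [patternInteraction, dif_pos hC]
      exact hg _
    · simpa [patternInteraction_of_not_exists g hC] using (abs_nonneg _).trans (hg fun _ => false)
  calc normNS (patternInteraction A g)
      = ∑ C ∈ T, ⨆ z, ENNReal.ofReal |patternInteraction A g C.1 z| := tsum_eq_sum hzero
    _ ≤ T.card • ENNReal.ofReal c :=
        Finset.sum_le_card_nsmul _ _ _ fun C _ => iSup_le (hbound C.1)
    _ ≤ A.card * ENNReal.ofReal c := by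
        rw [nsmul_eq_mul]
        gcongr
        exact_mod_cast Finset.card_image_le.trans Finset.card_attach.le

lemma psi_patternInteraction {x y : Conf} (hxy : {i | x i ≠ y i}.Finite) (hA : A.Nonempty) :
    psi (patternInteraction A g) x y = ∑ w, g w * deltaCount A w x y := by
  have hsupp : Function.support (fun C => patternInteraction A g C y - patternInteraction A g C x)
      ⊆ Set.range fun k : ℤ => A.image fun i => i + k := by
    intro C hC
    by_contra hne
    exact hC (by simp [patternInteraction_of_not_exists g (fun ⟨k, hk⟩ => hne ⟨k, hk.symm⟩)])
  rw [psi, ← (image_add_right_injective hA).tsum_eq hsupp,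
    tsum_sub_image_add_eq_sum hxy (isLocalInteraction_patternInteraction g)
      (isShiftInvInteraction_patternInteraction g hA)]
  simp [patternInteraction_self g hA, extendPattern]

end PatternInteraction

section UpperBound

variable {Φ : Finset ℤ → Conf → ℝ}

noncomputable def supAbs (Φ : Finset ℤ → Conf → ℝ) (C : Finset ℤ) : ℝ≥0∞ :=
  ⨆ z, ENNReal.ofReal |Φ C z|

lemma ofReal_abs_le_supAbs (Φ : Finset ℤ → Conf → ℝ) (C : Finset ℤ) (z : Conf) :
    ENNReal.ofReal |Φ C z| ≤ supAbs Φ C :=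
  le_iSup (fun z => ENNReal.ofReal |Φ C z|) z

lemma IsShiftInvInteraction.supAbs_image (hshift : IsShiftInvInteraction Φ) (A : Finset ℤ)
    (k : ℤ) : supAbs Φ (A.image fun i => i + k) = supAbs Φ A := by
  refine le_antisymm (iSup_le fun z => ?_) (iSup_le fun z => ?_)
  · rw [hshift]
    exact ofReal_abs_le_supAbs Φ A _
  · have hz : Φ (A.image fun i => i + k) (fun i => z (i - k)) = Φ A z := by
      rw [hshift]
      simp
    exact hz ▸ ofReal_abs_le_supAbs Φ _ _

lemma enorm_sum_mul_le {ι : Type*} (s : Finset ι) (a b : ι → ℝ) {M : ℝ≥0∞}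
    (ha : ∀ i ∈ s, ‖a i‖ₑ ≤ M) : ‖∑ i ∈ s, a i * b i‖ₑ ≤ M * ∑ i ∈ s, ‖b i‖ₑ := by
  rw [Finset.mul_sum]
  refine (enorm_sum_le _ _).trans (Finset.sum_le_sum fun i hi => ?_)
  rw [enorm_mul]
  gcongr
  exact ha i hi

abbrev AnchoredShape : Type := {A : Finset ℤ // 0 ∈ A ∧ ∀ a ∈ A, 0 ≤ a}

namespace AnchoredShape

def place (p : AnchoredShape × ℤ) : Finset ℤ := p.1.1.image fun i => i + p.2

lemma le_of_place_eq {A B : AnchoredShape} {k k' : ℤ} (h : place (A, k) = place (B, k')) :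
    k' ≤ k := by
  have hk : 0 + k ∈ place (A, k) := Finset.mem_image_of_mem _ A.2.1
  obtain ⟨b, hb, hbk⟩ := Finset.mem_image.1 (h ▸ hk)
  have := B.2.2 b hb
  omega

lemma place_injective : Function.Injective place := by
  rintro ⟨A, k⟩ ⟨B, k'⟩ h
  obtain rfl : k = k' := le_antisymm (le_of_place_eq h.symm) (le_of_place_eq h)
  obtain rfl : A = B := Subtype.ext (Finset.image_injective (add_left_injective k) h)
  rfl

lemma exists_place_eq {C : Finset ℤ} (hC : C.Nonempty) : ∃ p, place p = C := by
  set m := C.min' hC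
  refine ⟨(⟨C.image fun i => i + -m, ?_, ?_⟩, m), ?_⟩
  · exact Finset.mem_image.2 ⟨m, C.min'_mem hC, add_neg_cancel m⟩
  · simp only [Finset.mem_image, forall_exists_index, and_imp]
    rintro _ c hc rfl
    have := C.min'_le c hc
    omega
  · simp only [place, image_add_image_add, neg_add_cancel, add_zero, Finset.image_id']

end AnchoredShape

open AnchoredShape

lemma tsum_card_mul_supAbs_le (hshift : IsShiftInvInteraction Φ) :
    ∑' A : AnchoredShape, (A.1.card : ℝ≥0∞) * supAbs Φ A.1 ≤ normNS Φ := by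
  let ι : (Σ A : AnchoredShape, {a // a ∈ A.1}) → {C : Finset ℤ // (0 : ℤ) ∈ C} :=
    fun σ => ⟨place (σ.1, -σ.2), Finset.mem_image.2 ⟨σ.2, σ.2.2, add_neg_cancel _⟩⟩
  have hι : Function.Injective ι := by
    rintro ⟨A, a⟩ ⟨B, b⟩ h
    obtain ⟨rfl, hab⟩ := Prod.ext_iff.1 (place_injective (congrArg Subtype.val h))
    obtain rfl : a = b := Subtype.ext (neg_injective hab)
    rfl
  calc ∑' A : AnchoredShape, (A.1.card : ℝ≥0∞) * supAbs Φ A.1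
      = ∑' σ : (Σ A : AnchoredShape, {a // a ∈ A.1}), supAbs Φ (ι σ).1 := by
        rw [ENNReal.tsum_sigma']
        refine tsum_congr fun A => ?_
        simp only [ι, place, hshift.supAbs_image, tsum_fintype, Finset.sum_const,
          Finset.card_univ, Fintype.card_coe, nsmul_eq_mul]
    _ ≤ ∑' C : {C : Finset ℤ // (0 : ℤ) ∈ C}, supAbs Φ C.1 :=
        ENNReal.tsum_comp_le_tsum_of_injective hι _
    _ = normNS Φ := rfl

lemma ofReal_abs_psi_le_tsum (hloc : IsLocalInteraction Φ) (x y : Conf) :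
    ENNReal.ofReal |psi Φ x y|
      ≤ ∑' A : AnchoredShape, ‖∑' k : ℤ, (Φ (place (A, k)) y - Φ (place (A, k)) x)‖ₑ := by
  set f : Finset ℤ → ℝ := fun C => Φ C y - Φ C x
  -- a divergent series defining `ψ` has the junk value `0`
  by_cases hsum : Summable f
  · have hsupp : Function.support f ⊆ Set.range place := by
      intro C hC
      obtain rfl | hne := C.eq_empty_or_nonempty
      · exact absurd (sub_eq_zero.2 (hloc ∅ y x (by simp))) hC
      · exact exists_place_eq hne
    have hsum' : Summable (f ∘ place) :=
      (place_injective.summable_iff fun C hC => Function.notMem_support.1 (hC <| hsupp ·)).2 hsum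
    rw [psi, ← Real.enorm_eq_ofReal_abs, ← place_injective.tsum_eq hsupp]
    exact (congrArg _ hsum'.tsum_prod).trans_le enorm_tsum_le_tsum_enorm
  · simp [psi, f, tsum_eq_zero_of_not_summable hsum]

end UpperBound

section DualNorm

open AnchoredShape

variable {x y : Conf}

noncomputable def patternDiscrepancy (x y : Conf) : ℝ≥0∞ :=
  ⨆ A : {A : Finset ℤ // A.Nonempty},
    (∑ w : ({a // a ∈ (A : Finset ℤ)} → Bool), ENNReal.ofReal |deltaCount (A : Finset ℤ) w x y|)
      / ((A : Finset ℤ).card : ℝ≥0∞)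

lemma sum_enorm_deltaCount_le {A : Finset ℤ} (hA : A.Nonempty) :
    ∑ w, ‖deltaCount A w x y‖ₑ ≤ A.card * patternDiscrepancy x y := by
  simp only [Real.enorm_eq_ofReal_abs]
  rw [mul_comm, ← ENNReal.div_le_iff (by simpa using hA.ne_empty) (by simp)]
  exact le_iSup_of_le (ι := {A : Finset ℤ // A.Nonempty}) ⟨A, hA⟩ le_rfl

lemma ofReal_abs_psi_le (hxy : {i | x i ≠ y i}.Finite) {Φ : Finset ℤ → Conf → ℝ}
    (hloc : IsLocalInteraction Φ) (hshift : IsShiftInvInteraction Φ) :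
    ENNReal.ofReal |psi Φ x y| ≤ normNS Φ * patternDiscrepancy x y := by
  calc ENNReal.ofReal |psi Φ x y|
      ≤ ∑' A : AnchoredShape, ‖∑' k : ℤ, (Φ (place (A, k)) y - Φ (place (A, k)) x)‖ₑ :=
        ofReal_abs_psi_le_tsum hloc x y
    _ = ∑' A : AnchoredShape, ‖∑ w, Φ A.1 (extendPattern A.1 w) * deltaCount A.1 w x y‖ₑ := by
        simp only [place, tsum_sub_image_add_eq_sum hxy hloc hshift]
    _ ≤ ∑' A : AnchoredShape, (A.1.card : ℝ≥0∞) * supAbs Φ A.1 * patternDiscrepancy x y := by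
        refine ENNReal.tsum_le_tsum fun A => (enorm_sum_mul_le _ _ _ fun w _ =>
          (Real.enorm_eq_ofReal_abs _).trans_le (ofReal_abs_le_supAbs Φ A.1 _)).trans ?_
        rw [mul_comm _ (supAbs Φ A.1), mul_assoc]
        gcongr
        exact sum_enorm_deltaCount_le ⟨0, A.2.1⟩
    _ ≤ normNS Φ * patternDiscrepancy x y := by
        rw [ENNReal.tsum_mul_right]
        gcongr
        exact tsum_card_mul_supAbs_le hshift

noncomputable def extremalInteraction (x y : Conf) (A : Finset ℤ) : Finset ℤ → Conf → ℝ :=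
  patternInteraction A fun w => (A.card : ℝ)⁻¹ * SignType.sign (deltaCount A w x y)

lemma ofReal_abs_psi_extremalInteraction (hxy : {i | x i ≠ y i}.Finite) {A : Finset ℤ}
    (hA : A.Nonempty) :
    ENNReal.ofReal |psi (extremalInteraction x y A) x y|
      = (∑ w, ENNReal.ofReal |deltaCount A w x y|) / A.card := by
  have hcard : (0 : ℝ) < A.card := by exact_mod_cast hA.card_pos
  rw [extremalInteraction, psi_patternInteraction _ hxy hA]
  simp only [mul_assoc, sign_mul_self, ← Finset.mul_sum]
  rw [abs_of_nonneg (by positivity), ENNReal.ofReal_mul (by positivity),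
    ENNReal.ofReal_inv_of_pos hcard, ENNReal.ofReal_natCast,
    ENNReal.ofReal_sum_of_nonneg fun w _ => abs_nonneg _, ENNReal.div_eq_inv_mul]

lemma normNS_extremalInteraction_le {A : Finset ℤ} (hA : A.Nonempty) :
    normNS (extremalInteraction x y A) ≤ 1 := by
  have hcard : (0 : ℝ) < A.card := by exact_mod_cast hA.card_pos
  refine (normNS_patternInteraction_le (c := (A.card : ℝ)⁻¹) _ fun w => ?_).trans_eq ?_
  · rw [abs_mul, abs_of_pos (inv_pos.2 hcard)]
    refine mul_le_of_le_one_right (inv_pos.2 hcard).le ?_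
    rcases SignType.sign (deltaCount A w x y) with _ | _ | _ <;> simp
  · rw [ENNReal.ofReal_inv_of_pos hcard, ENNReal.ofReal_natCast,
      ENNReal.mul_inv_cancel (by simpa using hA.ne_empty) (by simp)]

end DualNorm

/-- on the binary full shift `{0,1}^ℤ`, for every asymptotic pair `(x,y)` the
dual norm of `Φ ↦ ψ_Φ(x,y)` on the space of shift-invariant norm-summable interactions equals
`sup_A (1/|A|) ∑_{w ∈ {0,1}^A} |Δ_w(x,y)|`. -/
theorem stmt_16 (x y : Conf) (hxy : {i | x i ≠ y i}.Finite) :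
    (⨆ Φ ∈ {Φ : Finset ℤ → Conf → ℝ |
        IsLocalInteraction Φ ∧ IsShiftInvInteraction Φ ∧ normNS Φ ≤ 1},
      ENNReal.ofReal |psi Φ x y|)
    = ⨆ A : {A : Finset ℤ // A.Nonempty},
        (∑ w : ({a // a ∈ (A : Finset ℤ)} → Bool),
          ENNReal.ofReal |deltaCount (A : Finset ℤ) w x y|) / ((A : Finset ℤ).card : ℝ≥0∞) := by
  refine le_antisymm (iSup₂_le fun Φ ⟨hloc, hshift, hnorm⟩ => ?_) (iSup_le fun ⟨A, hA⟩ => ?_)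
  · calc ENNReal.ofReal |psi Φ x y| ≤ normNS Φ * patternDiscrepancy x y :=
          ofReal_abs_psi_le hxy hloc hshift
      _ ≤ patternDiscrepancy x y := mul_le_of_le_one_left zero_le hnorm
  · rw [← ofReal_abs_psi_extremalInteraction hxy hA]
    exact le_iSup₂_of_le (extremalInteraction x y A)
      ⟨isLocalInteraction_patternInteraction _, isShiftInvInteraction_patternInteraction _ hA,
        normNS_extremalInteraction_le hA⟩ le_rfl
end
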